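/- Let n ≥ 2 be an integer. The function Θ ↦ (1/Θⁿ)·∫₀^Θ sin(θ)^{n−1} dθ is strictly decreasing for Θ ∈ (0, π), and it converges to 1/n as Θ → 0⁺. -/

import Mathlib

open Real Filter

lemma cap_mul_cos_lt_sin {x : ℝ} (hx : 0 < x) (hx' : x < Real.pi) :
    x * Real.cos x < Real.sin x := by
  rcases lt_or_ge x (Real.pi / 2) with h | h
  · have hc : 0 < Real.cos x := Real.cos_pos_of_mem_Ioo ⟨by linarith [Real.pi_pos], h⟩
    have ht : x < Real.tan x := Real.lt_tan hx h
    rw [Real.tan_eq_sin_div_cos, lt_div_iff₀ hc] at ht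
    linarith
  · have hc : Real.cos x ≤ 0 :=
      Real.cos_nonpos_of_pi_div_two_le_of_le h (by linarith [Real.pi_pos])
    have hs : 0 < Real.sin x := Real.sin_pos_of_pos_of_lt_pi hx hx'
    nlinarith

lemma cap_sinc_strictAnti : StrictAntiOn (fun x : ℝ => Real.sin x / x) (Set.Ioo 0 Real.pi) := by
  apply strictAntiOn_of_deriv_neg (convex_Ioo 0 Real.pi)
  · exact Real.continuous_sin.continuousOn.div continuousOn_id
      (fun x hx => ne_of_gt hx.1)
  · intro x hx
    rw [interior_Ioo] at hx
    have hd : HasDerivAt (fun x : ℝ => Real.sin x / x)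
        ((Real.cos x * x - Real.sin x * 1) / x ^ 2) x :=
      (Real.hasDerivAt_sin x).div (hasDerivAt_id x) (ne_of_gt hx.1)
    rw [hd.deriv]
    apply div_neg_of_neg_of_pos
    · have := cap_mul_cos_lt_sin hx.1 hx.2
      nlinarith
    · exact pow_pos hx.1 2

lemma cap_rewrite (n : ℕ) (hn : 2 ≤ n) {a : ℝ} (ha : 0 < a) :
    (1 / a ^ n) * ∫ θ in (0:ℝ)..a, Real.sin θ ^ (n - 1)
      = ∫ t in (0:ℝ)..1, (Real.sin (a * t) / a) ^ (n - 1) := by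
  have h1 : (∫ t in (0:ℝ)..1, Real.sin (a * t) ^ (n - 1))
      = a⁻¹ * ∫ θ in (0:ℝ)..a, Real.sin θ ^ (n - 1) := by
    have := intervalIntegral.integral_comp_mul_left
      (fun θ => Real.sin θ ^ (n - 1)) (a := 0) (b := 1) (c := a) ha.ne'
    simpa [smul_eq_mul] using this
  have h2 : (∫ t in (0:ℝ)..1, (Real.sin (a * t) / a) ^ (n - 1))
      = (1 / a ^ (n - 1)) * ∫ t in (0:ℝ)..1, Real.sin (a * t) ^ (n - 1) := by
    rw [← intervalIntegral.integral_const_mul]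
    congr 1; ext t
    rw [div_pow]; ring
  have hpow : a ^ (n - 1) * a = a ^ n := by
    rw [← pow_succ]; congr 1; omega
  rw [h2, h1, ← mul_assoc, ← hpow, one_div, one_div, mul_inv]

theorem cap_volume_ratio_strictAntiOn_and_tendsto (n : ℕ) (hn : 2 ≤ n) :
    StrictAntiOn
      (fun Θ : ℝ => (1 / Θ ^ n) * ∫ θ in (0 : ℝ)..Θ, Real.sin θ ^ (n - 1))
      (Set.Ioo 0 Real.pi)
    ∧ Filter.Tendsto
        (fun Θ : ℝ => (1 / Θ ^ n) * ∫ θ in (0 : ℝ)..Θ, Real.sin θ ^ (n - 1))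
        (nhdsWithin 0 (Set.Ioi 0)) (nhds (1 / n)) := by
  have hn1 : n - 1 ≠ 0 := by omega
  constructor
  · -- strict antitone
    intro a ha b hb hab
    show (1 / b ^ n) * (∫ θ in (0:ℝ)..b, Real.sin θ ^ (n - 1))
        < (1 / a ^ n) * ∫ θ in (0:ℝ)..a, Real.sin θ ^ (n - 1)
    rw [cap_rewrite n hn ha.1, cap_rewrite n hn hb.1]
    have hcont : ∀ c : ℝ, ContinuousOn (fun t : ℝ => (Real.sin (c * t) / c) ^ (n - 1))
        (Set.Icc 0 1) := by
      intro c
      exact (((Real.continuous_sin.comp (continuous_const.mul continuous_id)).div_const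
        c).pow (n - 1)).continuousOn
    have key : ∀ t : ℝ, 0 < t → t ≤ 1 → Real.sin (b * t) / b < Real.sin (a * t) / a := by
      intro t ht ht1
      have hat : 0 < a * t := mul_pos ha.1 ht
      have hbt : a * t < b * t := by nlinarith
      have hbtpi : b * t < Real.pi := by nlinarith [hb.2, hb.1]
      have := cap_sinc_strictAnti ⟨hat, lt_trans hbt hbtpi⟩ ⟨lt_trans hat hbt, hbtpi⟩ hbt
      have hgen : ∀ x : ℝ, 0 < x → Real.sin (x * t) / x = t * (Real.sin (x * t) / (x * t)) := by
        intro x hx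
        field_simp [hx.ne', ht.ne']
      have h1 := hgen b hb.1
      have h2 := hgen a ha.1
      rw [h1, h2]
      exact mul_lt_mul_of_pos_left this ht
    have hnonneg : ∀ t ∈ Set.Icc (0:ℝ) 1, 0 ≤ Real.sin (b * t) / b := by
      intro t ht
      apply div_nonneg _ hb.1.le
      apply Real.sin_nonneg_of_nonneg_of_le_pi
      · exact mul_nonneg hb.1.le ht.1
      · nlinarith [hb.2, ht.2, hb.1]
    apply intervalIntegral.integral_lt_integral_of_continuousOn_of_le_of_exists_lt
      one_pos (hcont b) (hcont a)
    · intro t ht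
      exact pow_le_pow_left₀ (hnonneg t ⟨ht.1.le, ht.2⟩) (key t ht.1 ht.2).le _
    · refine ⟨1, ⟨zero_le_one, le_refl 1⟩, ?_⟩
      exact pow_lt_pow_left₀ (key 1 one_pos le_rfl) (hnonneg 1 ⟨zero_le_one, le_rfl⟩) hn1
  · -- limit
    have hnn : n - 1 + 1 = n := by omega
    have hcast : ((n - 1 : ℕ) : ℝ) + 1 = (n : ℝ) := by
      rw [Nat.cast_sub (by omega : 1 ≤ n)]; ring
    have hn0 : (0:ℝ) < n := by
      have : 0 < n := by omega
      exact_mod_cast this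
    have hmem : Set.Ioo (0:ℝ) 1 ∈ nhdsWithin (0:ℝ) (Set.Ioi 0) :=
      Ioo_mem_nhdsGT_of_mem ⟨le_refl 0, one_pos⟩
    have hupper : ∀ Θ ∈ Set.Ioo (0:ℝ) 1,
        (1 / Θ ^ n) * (∫ θ in (0:ℝ)..Θ, Real.sin θ ^ (n - 1)) ≤ 1 / (n:ℝ) := by
      intro Θ hΘ
      have hΘn : (0:ℝ) < Θ ^ n := pow_pos hΘ.1 n
      have hip := integral_pow (n := n - 1) (a := (0:ℝ)) (b := Θ)
      rw [hnn] at hip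
      have hint : (∫ θ in (0:ℝ)..Θ, Real.sin θ ^ (n - 1)) ≤ Θ ^ n / n := by
        calc (∫ θ in (0:ℝ)..Θ, Real.sin θ ^ (n - 1))
            ≤ ∫ θ in (0:ℝ)..Θ, θ ^ (n - 1) := by
              apply intervalIntegral.integral_mono_on hΘ.1.le
              · exact ((Real.continuous_sin.pow _).intervalIntegrable 0 Θ)
              · exact ((continuous_pow _).intervalIntegrable 0 Θ)
              · intro θ hθ
                have hs0 : 0 ≤ Real.sin θ := Real.sin_nonneg_of_nonneg_of_le_pi hθ.1
                  (by nlinarith [hθ.2, hΘ.2, Real.pi_gt_three])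
                rcases eq_or_lt_of_le hθ.1 with h | h
                · simp [← h]
                · exact pow_le_pow_left₀ hs0 (Real.sin_lt h).le _
          _ = Θ ^ n / n := by rw [hip, hcast, zero_pow (by omega : n ≠ 0), sub_zero]
      calc (1 / Θ ^ n) * (∫ θ in (0:ℝ)..Θ, Real.sin θ ^ (n - 1))
          ≤ (1 / Θ ^ n) * (Θ ^ n / n) := by
            apply mul_le_mul_of_nonneg_left hint (by positivity)
        _ = 1 / (n:ℝ) := by field_simp
    have hlower : ∀ Θ ∈ Set.Ioo (0:ℝ) 1,
        (1 - Θ ^ 2 / 4) ^ (n - 1) / (n:ℝ) ≤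
          (1 / Θ ^ n) * (∫ θ in (0:ℝ)..Θ, Real.sin θ ^ (n - 1)) := by
      intro Θ hΘ
      have hΘn : (0:ℝ) < Θ ^ n := pow_pos hΘ.1 n
      obtain ⟨c, hc⟩ : ∃ c : ℝ, c = 1 - Θ ^ 2 / 4 := ⟨_, rfl⟩
      rw [← hc]
      have hc0 : 0 < c := by rw [hc]; nlinarith [hΘ.1, hΘ.2]
      have hip := integral_pow (n := n - 1) (a := (0:ℝ)) (b := Θ)
      rw [hnn] at hip
      have hint : c ^ (n - 1) * (Θ ^ n / n) ≤ (∫ θ in (0:ℝ)..Θ, Real.sin θ ^ (n - 1)) := by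
        calc c ^ (n - 1) * (Θ ^ n / n)
            = ∫ θ in (0:ℝ)..Θ, c ^ (n - 1) * θ ^ (n - 1) := by
              rw [intervalIntegral.integral_const_mul, hip, hcast, zero_pow (by omega : n ≠ 0), sub_zero]
          _ ≤ ∫ θ in (0:ℝ)..Θ, Real.sin θ ^ (n - 1) := by
              apply intervalIntegral.integral_mono_on hΘ.1.le
              · exact ((continuous_const.mul (continuous_pow _)).intervalIntegrable 0 Θ)
              · exact ((Real.continuous_sin.pow _).intervalIntegrable 0 Θ)
              · intro θ hθ
                rcases eq_or_lt_of_le hθ.1 with h | h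
                · simp [← h, zero_pow hn1]
                · have hsin : c * θ ≤ Real.sin θ := by
                    have h3 : θ - θ ^ 3 / 4 < Real.sin θ :=
                      by have := Real.sin_gt_sub_cube h; nlinarith [pow_pos h 3]
                    have h4 : c * θ ≤ θ - θ ^ 3 / 4 := by
                      rw [hc]
                      nlinarith [hθ.2, hΘ.2, h.le,
                        mul_nonneg (mul_nonneg (sub_nonneg.2 hθ.2)
                          (by linarith [hθ.1, hΘ.1.le] : (0:ℝ) ≤ Θ + θ)) h.le]
                    linarith
                  calc c ^ (n-1) * θ ^ (n-1) = (c * θ) ^ (n-1) := (mul_pow c θ _).symm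
                    _ ≤ Real.sin θ ^ (n-1) :=
                        pow_le_pow_left₀ (by positivity) hsin _
      calc c ^ (n - 1) / (n:ℝ)
          = (1 / Θ ^ n) * (c ^ (n - 1) * (Θ ^ n / n)) := by field_simp
        _ ≤ (1 / Θ ^ n) * (∫ θ in (0:ℝ)..Θ, Real.sin θ ^ (n - 1)) := by
            apply mul_le_mul_of_nonneg_left hint (by positivity)
    have hlim : Filter.Tendsto (fun Θ : ℝ => (1 - Θ ^ 2 / 4) ^ (n - 1) / (n:ℝ))
        (nhdsWithin 0 (Set.Ioi 0)) (nhds (1 / (n:ℝ))) := by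
      have hcont : Continuous (fun Θ : ℝ => (1 - Θ ^ 2 / 4) ^ (n - 1) / (n:ℝ)) := by
        fun_prop
      have h0 := (hcont.tendsto 0).mono_left (nhdsWithin_le_nhds (s := Set.Ioi 0))
      simpa using h0
    refine tendsto_of_tendsto_of_tendsto_of_le_of_le' hlim tendsto_const_nhds ?_ ?_
    · filter_upwards [hmem] with Θ hΘ using hlower Θ hΘ
    · filter_upwards [hmem] with Θ hΘ using hupper Θ hΘ
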